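/- The sum of Δ(ν) = ∏_{t=1}^h (1 + φ_t(ν)) over all landing states ν ∈ {0,1}^h (with any number of zeros) equals the Bell number B(h+1). -/
import Mathlib


open Finset
open scoped Classical

/-- Stirling numbers of the second kind. -/
def stirling : ℕ → ℕ → ℕ
  | 0, 0 => 1
  | 0, _ + 1 => 0
  | _ + 1, 0 => 0
  | n + 1, k + 1 => (k + 1) * stirling n (k + 1) + stirling n k

/-- Bell numbers. -/
def bellNum (n : ℕ) : ℕ := ∑ k ∈ Finset.range (n + 1), stirling n k

/-- A TL-state of length `h`: `ν t = 0` means no ball lands at (1-based) time `t+1`;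
otherwise `ν t` is the airtime of the ball landing at time `t+1`, which must be `≥ t+1`,
and no two balls were thrown at the same instant. -/
def IsTL (h : ℕ) (ν : Fin h → Fin (h + 1)) : Prop :=
  (∀ t : Fin h, (ν t : ℕ) = 0 ∨ t.val + 1 ≤ (ν t : ℕ)) ∧
  ∀ j k : Fin h, j ≠ k → (ν j : ℕ) ≠ 0 → (ν k : ℕ) ≠ 0 →
    (ν j : ℕ) + k.val ≠ (ν k : ℕ) + j.val

/-- Number of empty slots of a TL-state. -/
def tlZeros {h : ℕ} (ν : Fin h → Fin (h + 1)) : ℕ :=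
  (Finset.univ.filter (fun t : Fin h => (ν t : ℕ) = 0)).card

/-- Number of zeros of a landing state. -/
def numZeros {h : ℕ} (ν : Fin h → Bool) : ℕ :=
  (Finset.univ.filter (fun t : Fin h => ν t = false)).card

/-- `φ_t(ν)` (with `t : Fin h` representing 1-based time `t+1`). -/
def phi {h : ℕ} (ν : Fin h → Bool) (t : Fin h) : ℕ :=
  if ν t = true then
    (Finset.univ.filter (fun j : Fin h => t < j ∧ ν j = false)).card
  else 0

/-- The weight `Δ(ν)`. -/
def Delta {h : ℕ} (ν : Fin h → Bool) : ℕ := ∏ t : Fin h, (1 + phi ν t)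

/-- 1-based access to a landing state, `false` out of range (convention `ν_t = 0` for `t > h`). -/
def getB {h : ℕ} (ν : Fin h → Bool) (j : ℕ) : Bool :=
  if hj : 1 ≤ j ∧ j ≤ h then ν ⟨j - 1, by omega⟩ else false

/-- Throwing operator on landing states: `theta 0` is the left shift (wait), and for
`1 ≤ j`, `theta j` shifts left and places a ball at 1-based position `j`. -/
def theta {h : ℕ} (j : ℕ) (ν : Fin h → Bool) : Fin h → Bool :=
  fun t => if t.val + 1 = j then true else getB ν (t.val + 2)

/-- 1-based access to a TL-state given as a ℕ-valued tuple, `0` out of range. -/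
def getN {h : ℕ} (ν : Fin h → ℕ) (j : ℕ) : ℕ :=
  if hj : 1 ≤ j ∧ j ≤ h then ν ⟨j - 1, by omega⟩ else 0

/-- Throwing operator on ℕ-valued TL-states. -/
def thetaN {h : ℕ} (j : ℕ) (ν : Fin h → ℕ) : Fin h → ℕ :=
  fun t => if t.val + 1 = j then j else getN ν (t.val + 2)

/-- Transition probabilities for the standard juggling chain on landing states. -/
noncomputable def pStd (h f : ℕ) (ν ω : Fin h → Bool) : ℝ :=
  if getB ν 1 = false then (if ω = theta 0 ν then 1 else 0)
  else if ∃ j, 1 ≤ j ∧ j ≤ h ∧ getB ν (j + 1) = false ∧ ω = theta j ν then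
    1 / ((f : ℝ) + 1)
  else 0

/-- The set of landing states with exactly `f` zeros. -/
noncomputable def States (h f : ℕ) : Finset (Fin h → Bool) :=
  Finset.univ.filter (fun ν => numZeros ν = f)

/-- The set of TL-states with exactly `f` empty slots. -/
noncomputable def TLStates (h f : ℕ) : Finset (Fin h → Fin (h + 1)) :=
  Finset.univ.filter (fun ν => IsTL h ν ∧ tlZeros ν = f)

/-- Projection from TL-states to landing states. -/
def proj {h : ℕ} (ν : Fin h → Fin (h + 1)) : Fin h → Bool :=
  fun t => decide ((ν t : ℕ) ≠ 0)

/-- Transition probabilities for the TL-state chain. -/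
noncomputable def pHat (h f : ℕ) (μ ν : Fin h → Fin (h + 1)) : ℝ :=
  if getN (h := h) (fun s => (μ s : ℕ)) 1 = 0 then
    (if (fun s => (ν s : ℕ)) = thetaN 0 (fun s => (μ s : ℕ)) then 1 else 0)
  else if ∃ j, 1 ≤ j ∧ j ≤ h ∧ getN (h := h) (fun s => (μ s : ℕ)) (j + 1) = 0 ∧
      (fun s => (ν s : ℕ)) = thetaN j (fun s => (μ s : ℕ)) then
    1 / ((f : ℝ) + 1)
  else 0


lemma numZeros_cons {h : ℕ} (b : Bool) (ν : Fin h → Bool) :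
    numZeros (Fin.cons b ν) = (if b = false then 1 else 0) + numZeros ν := by
  simp only [numZeros, Finset.card_filter]
  rw [Fin.sum_univ_succ]
  simp

lemma phi_cons_zero {h : ℕ} (b : Bool) (ν : Fin h → Bool) :
    phi (Fin.cons b ν) 0 = if b = true then numZeros ν else 0 := by
  simp only [phi, numZeros, Finset.card_filter, Fin.cons_zero]
  by_cases hb : b = true
  · simp only [hb, if_true]
    rw [Fin.sum_univ_succ]
    simp [Fin.succ_pos]
  · simp [hb]

lemma phi_cons_succ {h : ℕ} (b : Bool) (ν : Fin h → Bool) (t : Fin h) :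
    phi (Fin.cons b ν) t.succ = phi ν t := by
  simp only [phi, Fin.cons_succ, Finset.card_filter]
  by_cases hb : ν t = true
  · simp only [hb, if_true]
    rw [Fin.sum_univ_succ]
    have h0 : ¬ (t.succ < (0 : Fin (h+1))) := by simp [Fin.lt_def]
    simp [h0, Fin.succ_lt_succ_iff]
  · rw [if_neg hb, if_neg hb]

lemma Delta_cons {h : ℕ} (b : Bool) (ν : Fin h → Bool) :
    Delta (Fin.cons b ν) = (1 + (if b = true then numZeros ν else 0)) * Delta ν := by
  simp only [Delta]
  rw [Fin.prod_univ_succ, phi_cons_zero]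
  congr 1
  exact Finset.prod_congr rfl fun t _ => by rw [phi_cons_succ]

lemma key (h : ℕ) : ∀ f : ℕ,
    (∑ ν : Fin h → Bool, if numZeros ν = f then Delta ν else 0) = stirling (h + 1) (f + 1) := by
  induction h with
  | zero =>
    intro f
    rw [Fintype.sum_unique]
    match f with
    | 0 => simp [numZeros, Delta, stirling]
    | f + 1 => simp [numZeros, Delta, stirling]
  | succ h ih =>
    intro f
    rw [← Equiv.sum_comp (Fin.consEquiv (fun _ : Fin (h+1) => Bool))]
    rw [Fintype.sum_prod_type, Fintype.sum_bool]
    simp only [Fin.consEquiv, Equiv.coe_fn_mk, Delta_cons, numZeros_cons]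
    simp only [Bool.true_eq_false, Bool.false_eq_true, if_false, if_true, zero_add, add_zero, one_mul]
    have h1 : (∑ ν : Fin h → Bool, if numZeros ν = f then (1 + numZeros ν) * Delta ν else 0)
        = (1 + f) * stirling (h + 1) (f + 1) := by
      rw [← ih f, Finset.mul_sum]
      refine Finset.sum_congr rfl fun ν _ => ?_
      by_cases hn : numZeros ν = f
      · simp [hn]
      · simp [hn]
    rw [h1]
    match f with
    | 0 =>
      have h2 : (∑ ν : Fin h → Bool, if 1 + numZeros ν = 0 then Delta ν else 0) = 0 := by
        refine Finset.sum_eq_zero fun ν _ => by simp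
      rw [h2]
      show 1 * stirling (h + 1) 1 + 0 = 1 * stirling (h + 1) 1 + stirling (h + 1) 0
      rfl
    | f + 1 =>
      have h2 : (∑ ν : Fin h → Bool, if 1 + numZeros ν = f + 1 then Delta ν else 0)
          = stirling (h + 1) (f + 1) := by
        rw [← ih f]
        refine Finset.sum_congr rfl fun ν _ => ?_
        congr 1
        simp [Nat.add_comm 1 (numZeros ν)]
      rw [h2, show (1 + (f + 1)) = f + 1 + 1 from by omega]
      rfl

/-- The sum of `Δ(ν)` over all landing states in `{0,1}^h` is the Bell number `B(h+1)`. -/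
theorem stmt3 (h : ℕ) :
    ∑ ν : Fin h → Bool, Delta ν = bellNum (h + 1) := by
  have hb : ∀ ν : Fin h → Bool, numZeros ν < h + 1 := fun ν =>
    Nat.lt_succ_of_le (le_trans (Finset.card_filter_le _ _) (le_of_eq
      (Finset.card_univ.trans (Fintype.card_fin h))))
  calc ∑ ν : Fin h → Bool, Delta ν
      = ∑ ν : Fin h → Bool, ∑ f ∈ Finset.range (h + 1),
          (if numZeros ν = f then Delta ν else 0) := by
        refine Finset.sum_congr rfl fun ν _ => ?_
        rw [Finset.sum_ite_eq (Finset.range (h + 1)) (numZeros ν) (fun _ => Delta ν),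
          if_pos (Finset.mem_range.2 (hb ν))]
    _ = ∑ f ∈ Finset.range (h + 1), ∑ ν : Fin h → Bool,
          (if numZeros ν = f then Delta ν else 0) := Finset.sum_comm
    _ = ∑ f ∈ Finset.range (h + 1), stirling (h + 1) (f + 1) :=
        Finset.sum_congr rfl fun f _ => key h f
    _ = bellNum (h + 1) := by
        have hB : bellNum (h + 1)
            = (∑ f ∈ Finset.range (h + 1), stirling (h + 1) (f + 1)) + stirling (h + 1) 0 := by
          rw [bellNum, Finset.sum_range_succ']
        rw [hB, show stirling (h + 1) 0 = 0 from rfl, add_zero]
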